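/- Let q be a prime power and n ≥ 3. A coprime tuple (a_1,...,a_n) ∈ F_q[t]^n admits a balanced multiset of tuples (equivalently, is a Smyth tuple) if and only if: (i) for every i, deg(a_i) ≤ max_{j≠i} deg(a_j), and (ii) every irreducible polynomial p ∈ F_q[t] divides at most n-2 of the a_i. -/

import Mathlib

/-!
Necessity is the ultrametric inequality. For a nonarchimedean absolute value on `F(t)`, pick a
row `x` of a balanced multiset whose `i`-th entry has the largest absolute value in its column;
since all columns are the same multiset, `|x i|` bounds every entry, and
`a i * x i = -∑ j ≠ i, a j * x j` gives `|a i| ≤ max_{j ≠ i} |a j|`. The place at infinity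
yields (i). At the place of an irreducible `p`, it shows that `p` cannot divide all `a j` but one
without dividing the last one too, which coprimality excludes; this is (ii).

For sufficiency, let `G` be a finite group and `g i ∈ G`. If `u = ∑ a i • g i` is not a unit of
the finite-dimensional algebra `F(t)[G]`, some `z ≠ 0` has `z * u = 0`, and the rows
`(z (h * (g i)⁻¹))ᵢ`, `h ∈ G`, form a balanced multiset (each column lists the values of `z`).
We take `G = GL_N(L)` for a finite extension `L` of `F` with more than `n` elements and find
`T i ∈ GL_N(L)` such that the matrix `∑ a i • T i` over `L(t)` kills `(1, t, …, t^(N-1))`; as this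
matrix is the image of `u` under a ring homomorphism `F(t)[G] → M_N(L(t))`, `u` is not a unit.
The rows of the `T i` are the coefficient vectors of the coordinates of `N` solutions of
`∑ a i * w i = 0` with `deg w i < N`. Conditions (i) and (ii) make every coordinate projection of
this solution space onto `L[t]_{<N}` surjective, so, as `L` has more than `n` elements, the
solutions can be chosen such that each `T i` is invertible.
-/

open scoped Classical

/-- A balanced multiset of tuples with respect to coefficients `a : Fin n → K`. -/
def IsBalanced {K : Type*} [Field K] {n : ℕ} (a : Fin n → K)
    (S : Multiset (Fin n → K)) : Prop :=
  S ≠ 0 ∧ (∀ v ∈ S, v ≠ 0 ∧ ∑ i, a i * v i = 0) ∧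
    ∀ j k : Fin n, S.map (fun v => v j) = S.map (fun v => v k)

open Finset Polynomial Matrix

theorem IsBalanced.valuation_le_sup {K Γ₀ : Type*} [Field K]
    [LinearOrderedCommGroupWithZero Γ₀] {n : ℕ} {a : Fin n → K} {S : Multiset (Fin n → K)}
    (hS : IsBalanced a S) (v : Valuation K Γ₀) (i : Fin n) :
    v (a i) ≤ (univ.erase i).sup fun j => v (a j) := by
  obtain ⟨hne, hrel, hcols⟩ := hS
  obtain ⟨w, hw, hmax⟩ := Multiset.exists_max_image (fun w => v (w i)) hne
  have hbound : ∀ w' ∈ S, ∀ j, v (w' j) ≤ v (w i) := by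
    intro w' hw' j
    have : w' j ∈ S.map (· i) := hcols j i ▸ Multiset.mem_map_of_mem (· j) hw'
    obtain ⟨w'', hw'', h⟩ := Multiset.mem_map.mp this
    exact h ▸ hmax w'' hw''
  have hwi : 0 < v (w i) := by
    obtain ⟨j, hj⟩ := Function.ne_iff.mp (hrel w hw).1
    exact (v.pos_iff.mpr hj).trans_le (hbound w hw j)
  by_contra! hlt
  have hai : 0 < v (a i) := zero_le.trans_lt hlt
  have hsum : a i * w i = -∑ j ∈ univ.erase i, a j * w j := by
    rw [eq_neg_iff_add_eq_zero, add_comm, Finset.sum_erase_add _ _ (mem_univ i)]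
    exact (hrel w hw).2
  have : v (a i * w i) < v (a i * w i) := by
    calc v (a i * w i) = v (∑ j ∈ univ.erase i, a j * w j) := by rw [hsum, Valuation.map_neg]
      _ < v (a i) * v (w i) := by
        refine v.map_sum_lt (mul_pos hai hwi).ne' fun j hj => ?_
        rw [map_mul]
        calc v (a j) * v (w j) ≤ v (a j) * v (w i) := by gcongr; exact hbound w hw j
          _ < v (a i) * v (w i) :=
            mul_lt_mul_of_pos_right ((le_sup (f := fun j => v (a j)) hj).trans_lt hlt) hwi
      _ = v (a i * w i) := (map_mul ..).symm
  exact lt_irrefl _ this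

theorem RatFunc.inftyValuation_lt_of_degree_lt {F : Type*} [Field F] {p q : F[X]}
    (h : p.degree < q.degree) :
    inftyValuation F (algebraMap F[X] (RatFunc F) p) <
      inftyValuation F (algebraMap F[X] (RatFunc F) q) := by
  have hq : q ≠ 0 := ne_zero_of_degree_gt h
  rcases eq_or_ne p 0 with rfl | hp
  · simpa [Valuation.pos_iff] using hq
  rw [inftyValuation_apply, inftyValuation_apply, inftyValuation.polynomial _ hq,
    inftyValuation.polynomial _ hp, WithZero.exp_lt_exp, Nat.cast_lt]
  exact natDegree_lt_natDegree hp h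

theorem IsBalanced.degree_le_sup {F : Type*} [Field F] {n : ℕ} {a : Fin n → F[X]}
    {S : Multiset (Fin n → RatFunc F)}
    (hS : IsBalanced (fun i => algebraMap F[X] (RatFunc F) (a i)) S) (i : Fin n) :
    (a i).degree ≤ (univ.erase i).sup fun j => (a j).degree := by
  by_contra! h
  have hpos : ⊥ < RatFunc.inftyValuation F (algebraMap F[X] (RatFunc F) (a i)) := by
    simpa using RatFunc.inftyValuation_lt_of_degree_lt (p := 0) (q := a i)
      (by rw [degree_zero]; exact bot_le.trans_lt h)
  refine (hS.valuation_le_sup (RatFunc.inftyValuation F) i).not_gt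
    ((Finset.sup_lt_iff hpos).2 ?_)
  exact fun j hj => RatFunc.inftyValuation_lt_of_degree_lt ((le_sup hj).trans_lt h)

open IsDedekindDomain in
theorem IsBalanced.mem_of_forall_ne_mem {R K : Type*} [CommRing R] [IsDedekindDomain R]
    [Field K] [Algebra R K] [IsFractionRing R K] (v : HeightOneSpectrum R) {n : ℕ} {a : Fin n → R}
    {S : Multiset (Fin n → K)} (hS : IsBalanced (fun i => algebraMap R K (a i)) S) (i : Fin n)
    (h : ∀ j ≠ i, a j ∈ v.asIdeal) : a i ∈ v.asIdeal := by
  by_contra hi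
  have hle := hS.valuation_le_sup (v.valuation K) i
  rw [(v.valuation_eq_one_iff_notMem (K := K)).2 hi] at hle
  refine hle.not_gt ((Finset.sup_lt_iff zero_lt_one).2 fun j hj => ?_)
  exact (v.valuation_lt_one_iff_mem (a j)).2 (h j (ne_of_mem_erase hj))

theorem IsBalanced.exists_ne_not_dvd {F : Type*} [Field F] {n : ℕ} {a : Fin n → F[X]}
    (hcop : Ideal.span (Set.range a) = ⊤) {S : Multiset (Fin n → RatFunc F)}
    (hS : IsBalanced (fun i => algebraMap F[X] (RatFunc F) (a i)) S) {p : F[X]}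
    (hp : Irreducible p) (k : Fin n) : ∃ j ≠ k, ¬ p ∣ a j := by
  by_contra! h
  let v : IsDedekindDomain.HeightOneSpectrum F[X] :=
    ⟨Ideal.span {p}, (Ideal.span_singleton_prime hp.ne_zero).2 hp.prime,
      by simpa using hp.ne_zero⟩
  have hall : ∀ i, p ∣ a i := by
    have hk := hS.mem_of_forall_ne_mem v k fun j hj => Ideal.mem_span_singleton.2 (h j hj)
    intro i
    rcases eq_or_ne i k with rfl | hi
    · exact Ideal.mem_span_singleton.1 hk
    · exact h i hi
  have : Ideal.span (Set.range a) ≤ Ideal.span {p} :=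
    Ideal.span_le.2 (Set.range_subset_iff.2 fun i => Ideal.mem_span_singleton.2 (hall i))
  exact hp.not_isUnit (Ideal.span_singleton_eq_top.1 (top_le_iff.1 (hcop ▸ this)))

theorem card_filter_le_sub_two_iff {α : Type*} [Fintype α] (hα : 2 ≤ Fintype.card α)
    (P : α → Prop) [DecidablePred P] :
    #{i | P i} ≤ Fintype.card α - 2 ↔ ∀ k, ∃ j ≠ k, ¬ P j := by
  have hsplit : #{i | P i} + #{i | ¬ P i} = Fintype.card α := card_filter_add_card_filter_not _
  have : Nonempty α := Fintype.card_pos_iff.1 (by omega)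
  constructor
  · intro h
    by_contra! hk
    obtain ⟨k, hk⟩ := hk
    have : #({i | ¬ P i} : Finset α) ≤ 1 := card_le_one.2 fun i hi j hj => by
      simp only [mem_filter, mem_univ, true_and] at hi hj
      rw [not_imp_comm.1 (hk i) hi, not_imp_comm.1 (hk j) hj]
    omega
  · intro h
    obtain ⟨j, -, hj⟩ := h (Classical.arbitrary α)
    obtain ⟨j', hj'j, hj'⟩ := h j
    have : 1 < #({i | ¬ P i} : Finset α) := one_lt_card.2 ⟨j, by simpa, j', by simpa, hj'j.symm⟩
    omega

theorem isBalanced_filter_ne_zero {K : Type*} [Field K] {n : ℕ} {a : Fin n → K}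
    {S : Multiset (Fin n → K)} (hrel : ∀ v ∈ S, ∑ i, a i * v i = 0)
    (hcols : ∀ j k : Fin n, S.map (fun v => v j) = S.map (fun v => v k))
    (hne : ∃ v ∈ S, v ≠ 0) :
    IsBalanced a (S.filter fun v => v ≠ 0) := by
  obtain ⟨v, hv, hv0⟩ := hne
  have hmem : v ∈ S.filter fun v => v ≠ 0 := Multiset.mem_filter.2 ⟨hv, hv0⟩
  refine ⟨fun h0 => by simp [h0] at hmem,
    fun v hv => ⟨(Multiset.mem_filter.1 hv).2, hrel v (Multiset.mem_filter.1 hv).1⟩, fun j k => ?_⟩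
  have hzero : ∀ j : Fin n, (S.filter fun v => v = 0).map (fun v => v j) =
      Multiset.replicate (S.filter fun v => v = 0).card 0 := fun j =>
    Multiset.eq_replicate.2 ⟨Multiset.card_map _ _, by simp +contextual⟩
  have := hcols j k
  rw [← Multiset.filter_add_not (fun v => v = 0) S, Multiset.map_add, Multiset.map_add, hzero,
    hzero] at this
  exact add_left_cancel this

section GroupAlgebra

variable {K G : Type*} [Field K] [Group G] [Finite G] {n : ℕ} [NeZero n]

theorem exists_isBalanced_of_mul_eq_zero (c : Fin n → K) (g : Fin n → G)
    {z : MonoidAlgebra K G} (hz : z ≠ 0) (h : z * ∑ i, MonoidAlgebra.single (g i) (c i) = 0) :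
    ∃ S, IsBalanced c S := by
  have := Fintype.ofFinite G
  let row : G → Fin n → K := fun x i => z.coeff (x * (g i)⁻¹)
  refine ⟨_, isBalanced_filter_ne_zero (S := univ.val.map row) ?_ ?_ ?_⟩
  · simp only [Multiset.mem_map, mem_val, mem_univ, true_and, forall_exists_index,
      forall_apply_eq_imp_iff]
    intro x
    simpa [row, Finset.mul_sum, MonoidAlgebra.coeff_mul_single_apply, mul_comm] using
      congrArg (MonoidAlgebra.coeff · x) h
  · have hcol : ∀ j, (univ.val.map row).map (fun v => v j) = univ.val.map z.coeff := fun j => by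
      conv_rhs => rw [← Multiset.map_univ_val_equiv (Equiv.mulRight (g j)⁻¹)]
      rw [Multiset.map_map, Multiset.map_map]
      rfl
    exact fun j k => by rw [hcol, hcol]
  · obtain ⟨x, hx⟩ : ∃ x, z.coeff x ≠ 0 := by
      by_contra! h0
      exact hz (MonoidAlgebra.ext (Finsupp.ext h0))
    refine ⟨row (x * g 0), Multiset.mem_map_of_mem _ (mem_univ _), fun h0 => hx ?_⟩
    simpa [row] using congrFun h0 0

theorem exists_mul_eq_zero_of_not_isUnit {A : Type*} [Ring A] [IsArtinianRing A] {u : A}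
    (hu : ¬ IsUnit u) : ∃ z ≠ 0, z * u = 0 := by
  rw [IsArtinianRing.isUnit_iff_isRightRegular, isRightRegular_iff_left_eq_zero_of_mul] at hu
  push Not at hu
  exact hu.imp fun z hz => ⟨hz.2, hz.1⟩

theorem exists_isBalanced_of_mulVec_eq_zero {R : Type*} [CommRing R] {N : ℕ} (c : Fin n → K)
    (g : Fin n → G) (κ : K →+* R) (ρ : G →* Matrix (Fin N) (Fin N) R) {w : Fin N → R}
    (hw : w ≠ 0) (h : ∑ i, κ (c i) • (ρ (g i) *ᵥ w) = 0) : ∃ S, IsBalanced c S := by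
  let Φ : MonoidAlgebra K G →+* Matrix (Fin N) (Fin N) R :=
    MonoidAlgebra.liftNCRingHom ((algebraMap R _).comp κ) ρ
      fun _ _ => Algebra.commute_algebraMap_left _ _
  let u := ∑ i, MonoidAlgebra.single (g i) (c i)
  have hΦu : Φ u *ᵥ w = 0 := by
    simpa [Φ, u, Matrix.sum_mulVec, Algebra.algebraMap_eq_smul_one, Matrix.smul_mulVec] using h
  have hu : ¬ IsUnit u := fun hu => hw <| by
    obtain ⟨M, hM⟩ := (hu.map Φ).exists_left_inv
    rw [← Matrix.one_mulVec w, ← hM, ← Matrix.mulVec_mulVec, hΦu, Matrix.mulVec_zero]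
  have : IsArtinianRing (MonoidAlgebra K G) := IsArtinianRing.of_finite K _
  obtain ⟨z, hz, hzu⟩ := exists_mul_eq_zero_of_not_isUnit hu
  exact exists_isBalanced_of_mul_eq_zero c g hz hzu

end GroupAlgebra

namespace Polynomial

variable {K : Type*} [Field K]

theorem degree_mul_lt_of_natDegree_le_of_degree_lt {p q : K[X]} {D N : ℕ}
    (hp : p.natDegree ≤ D) (hq : q.degree < N) : (p * q).degree < ↑(D + N) := by
  rcases eq_or_ne q 0 with rfl | hq0
  · simp
  refine (degree_le_natDegree.trans (Nat.cast_le.2 natDegree_mul_le)).trans_lt (Nat.cast_lt.2 ?_)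
  have := (natDegree_lt_iff_degree_lt hq0).2 hq
  omega

theorem exists_eq_mul_degree_lt_of_mem_span_singleton {c P : K[X]} {N : ℕ}
    (hP : P ∈ Ideal.span {c}) (hdeg : P.degree < ↑(N + c.natDegree)) :
    ∃ x, P = c * x ∧ x.degree < N := by
  obtain ⟨x, rfl⟩ := Ideal.mem_span_singleton.1 hP
  rcases eq_or_ne c 0 with rfl | hc
  · exact ⟨0, by simp, by simp⟩
  rcases eq_or_ne x 0 with rfl | hx
  · exact ⟨0, by simp, by simp⟩
  refine ⟨x, rfl, (natDegree_lt_iff_degree_lt hx).1 ?_⟩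
  have := (natDegree_lt_iff_degree_lt (mul_ne_zero hc hx)).2 hdeg
  rw [natDegree_mul hc hx] at this
  omega

theorem exists_degree_lt_sub_mul_mem {c m P : K[X]} {J : Ideal K[X]}
    (hP : P ∈ Ideal.span {c} ⊔ J) (hm : m ∈ J) (hm0 : m ≠ 0) :
    ∃ r, r.degree < m.degree ∧ P - c * r ∈ J := by
  obtain ⟨P₁, hP₁, y, hy, rfl⟩ := Submodule.mem_sup.1 hP
  obtain ⟨x, rfl⟩ := Ideal.mem_span_singleton'.1 hP₁
  refine ⟨x % m, degree_mod_lt x hm0, ?_⟩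
  have : x * c + y - c * (x % m) = y + c * (x / m) * m := by
    linear_combination (-c) * EuclideanDomain.div_add_mod x m
  rw [this]
  exact add_mem hy (J.mul_mem_left _ hm)

/-- The generators are added in order of increasing degree, so that the coefficient of a new
generator can be reduced modulo an earlier nonzero one without raising the degree bound. -/
theorem exists_eq_sum_mul_degree_lt_of_mem_span {ι : Type*} (s : Finset ι) (b : ι → K[X])
    {N : ℕ} (hN : ∀ i ∈ s, (b i).natDegree ≤ N) {P : K[X]} (hP : P ∈ Ideal.span (b '' s))
    (hdeg : P.degree < ↑(N + s.sup fun i => (b i).natDegree)) :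
    ∃ u : ι → K[X], P = ∑ i ∈ s, b i * u i ∧ ∀ i, (u i).degree < N := by
  induction s using Finset.induction_on_min_value (fun i => (b i).natDegree) generalizing P with
  | empty => exact ⟨0, by simpa using hP, fun i => by simp⟩
  | insert a s ha hmin ih =>
    rw [coe_insert, Set.image_insert_eq, Ideal.span_insert] at hP
    rw [sup_insert] at hdeg
    by_cases hs : ∃ i₀ ∈ s, b i₀ ≠ 0
    · obtain ⟨i₀, hi₀, hb₀⟩ := hs
      have hba : (b a).natDegree ≤ s.sup fun i => (b i).natDegree :=
        (hmin i₀ hi₀).trans (le_sup (f := fun i => (b i).natDegree) hi₀)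
      rw [max_eq_right hba] at hdeg
      obtain ⟨r, hr, hmem⟩ :=
        exists_degree_lt_sub_mul_mem hP (Ideal.subset_span ⟨i₀, hi₀, rfl⟩) hb₀
      have hrN : r.degree < N := hr.trans_le
        (degree_le_natDegree.trans (Nat.cast_le.2 (hN i₀ (mem_insert_of_mem hi₀))))
      obtain ⟨u, hu, hudeg⟩ := ih (fun i hi => hN i (mem_insert_of_mem hi)) hmem
        ((degree_sub_le _ _).trans_lt (max_lt hdeg
          (add_comm N _ ▸ degree_mul_lt_of_natDegree_le_of_degree_lt hba hrN)))
      refine ⟨Function.update u a r, ?_, fun i => ?_⟩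
      · rw [sum_insert ha, Function.update_self, sum_congr rfl fun i hi => by
          rw [Function.update_of_ne (ne_of_mem_of_not_mem hi ha)], ← hu]
        ring
      · rcases eq_or_ne i a with rfl | hia
        · simpa using hrN
        · simpa [hia] using hudeg i
    · push Not at hs
      have hJ : Ideal.span (b '' s) = ⊥ :=
        Ideal.span_eq_bot.2 (by rintro _ ⟨i, hi, rfl⟩; exact hs i hi)
      have hsup : (s.sup fun i => (b i).natDegree) = 0 :=
        Nat.eq_zero_of_le_zero (Finset.sup_le fun i hi => by simp [hs i hi])
      rw [hJ, sup_bot_eq] at hP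
      rw [hsup, max_eq_left (Nat.zero_le _)] at hdeg
      obtain ⟨x, rfl, hx⟩ := exists_eq_mul_degree_lt_of_mem_span_singleton hP hdeg
      refine ⟨Pi.single a x, ?_, fun i => ?_⟩
      · rw [sum_insert ha, Pi.single_eq_same, sum_eq_zero fun i hi => by simp [hs i hi], add_zero]
      · rcases eq_or_ne i a with rfl | hia
        · simpa using hx
        · simp [hia]

theorem sum_fin_C_coeff_mul_X_pow {p : K[X]} {N : ℕ} (hp : p.degree < N) :
    ∑ c : Fin N, C (p.coeff c) * X ^ (c : ℕ) = p :=
  (sum_fin (fun n a => C a * X ^ n) (by simp) hp).trans p.sum_C_mul_X_pow_eq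

/-- `(w i)ᵢ ↦ ∑ i, b i * w i`, each `w i : Fin N → K` being read as the coefficient vector of a
polynomial of degree `< N`. -/
noncomputable def syzygyMap {ι : Type*} [Fintype ι] (b : ι → K[X]) (N : ℕ) :
    (ι → Fin N → K) →ₗ[K] K[X] :=
  ∑ i, LinearMap.mulLeft K (b i) ∘ₗ
    Fintype.linearCombination K (fun c : Fin N => X ^ (c : ℕ)) ∘ₗ LinearMap.proj i

theorem syzygyMap_apply {ι : Type*} [Fintype ι] (b : ι → K[X]) (N : ℕ) (w : ι → Fin N → K) :
    syzygyMap b N w = ∑ i, b i * ∑ c, C (w i c) * X ^ (c : ℕ) := by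
  simp [syzygyMap, Fintype.linearCombination_apply, smul_eq_C_mul, Finset.mul_sum]

theorem surjective_proj_ker_syzygyMap {ι : Type*} [Fintype ι] [DecidableEq ι] {b : ι → K[X]}
    {N : ℕ} {k : ι} (hN : ∀ i, (b i).natDegree ≤ N)
    (hdeg : (b k).natDegree ≤ (univ.erase k).sup fun j => (b j).natDegree)
    (hspan : Ideal.span (b '' ↑(univ.erase k)) = ⊤) :
    Function.Surjective (LinearMap.proj k ∘ₗ (LinearMap.ker (syzygyMap b N)).subtype) := by
  intro y
  let p := ∑ c, C (y c) * X ^ (c : ℕ)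
  have hp : p.degree < N := degree_sum_fin_lt y
  obtain ⟨u, hu, hudeg⟩ := exists_eq_sum_mul_degree_lt_of_mem_span (univ.erase k) b
    (fun i _ => hN i) (P := -(b k * p)) (hspan ▸ Submodule.mem_top)
    (by rw [degree_neg, add_comm]; exact degree_mul_lt_of_natDegree_le_of_degree_lt hdeg hp)
  let w := Function.update (fun i (c : Fin N) => (u i).coeff c) k y
  have hwk : ∑ c, C (w k c) * X ^ (c : ℕ) = p := by simp [w, p]
  have hwi : ∀ i ∈ univ.erase k, ∑ c, C (w i c) * X ^ (c : ℕ) = u i := fun i hi => by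
    simp [w, ne_of_mem_erase hi, sum_fin_C_coeff_mul_X_pow (hudeg i)]
  have hw : syzygyMap b N w = 0 := by
    rw [syzygyMap_apply, ← add_sum_erase _ _ (mem_univ k), hwk, sum_congr rfl fun i hi => by
      rw [hwi i hi], ← hu]
    ring
  exact ⟨⟨w, hw⟩, by simp [w]⟩

end Polynomial

/-- The vectors are chosen one at a time, avoiding the `#ι` proper subspaces
`(g k)⁻¹ (span (g k ∘ x))`. -/
theorem exists_linearIndependent_comp_of_surjective {L V W ι : Type*} [Field L]
    [AddCommGroup V] [Module L V] [AddCommGroup W] [Module L W] [FiniteDimensional L W]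
    [Fintype ι] (g : ι → V →ₗ[L] W) (hg : ∀ k, Function.Surjective (g k))
    (hcard : Fintype.card ι < ENat.card L) {m : ℕ} (hm : m ≤ Module.finrank L W) :
    ∃ x : Fin m → V, ∀ k, LinearIndependent L (g k ∘ x) := by
  induction m with
  | zero => exact ⟨Fin.elim0, fun k => linearIndependent_empty_type⟩
  | succ m ih =>
    obtain ⟨x, hx⟩ := ih (by omega)
    let X : ι → Submodule L V := fun k => (Submodule.span L (Set.range (g k ∘ x))).comap (g k)
    have hX : ∀ k, X k ≠ ⊤ := by
      intro k htop
      have hspan : Submodule.span L (Set.range (g k ∘ x)) = ⊤ := by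
        refine eq_top_iff.2 fun w _ => ?_
        obtain ⟨v, rfl⟩ := hg k w
        exact Submodule.mem_comap.1 (htop ▸ Submodule.mem_top : v ∈ X k)
      have := finrank_range_le_card (R := L) (g k ∘ x)
      rw [Set.finrank, hspan, finrank_top, Fintype.card_fin] at this
      omega
    obtain ⟨v, -, hv⟩ := Set.exists_of_ssubset
      (Submodule.iUnion_ssubset_of_forall_ne_top_of_card_lt univ X hX (by simpa using hcard))
    refine ⟨Fin.snoc x v, fun k => ?_⟩
    rw [Fin.comp_snoc, linearIndependent_finSnoc]
    exact ⟨hx k, fun h => hv (Set.mem_biUnion (mem_univ k) h)⟩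

theorem exists_units_sum_smul_mulVec_eq_zero {L ι : Type*} [Field L] [Finite L] [Fintype ι]
    [DecidableEq ι] (b : ι → L[X]) (hcard : Fintype.card ι < Nat.card L)
    (hdeg : ∀ k, (b k).natDegree ≤ (univ.erase k).sup fun j => (b j).natDegree)
    (hspan : ∀ k, Ideal.span (b '' ↑(univ.erase k : Finset ι)) = ⊤) :
    ∃ (N : ℕ) (T : ι → (Matrix (Fin N) (Fin N) L)ˣ) (v : Fin N → L[X]),
      v ≠ 0 ∧ ∑ i, b i • ((T i : Matrix (Fin N) (Fin N) L).map C *ᵥ v) = 0 := by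
  let N := (univ.sup fun i => (b i).natDegree) + 1
  let V := LinearMap.ker (syzygyMap b N)
  have hN : ∀ i, (b i).natDegree ≤ N := fun i =>
    (le_sup (f := fun i => (b i).natDegree) (mem_univ i)).trans (Nat.le_succ _)
  obtain ⟨x, hx⟩ := exists_linearIndependent_comp_of_surjective
    (fun k => LinearMap.proj k ∘ₗ V.subtype)
    (fun k => surjective_proj_ker_syzygyMap hN (hdeg k) (hspan k))
    (by simpa [ENat.card_eq_coe_natCard] using hcard) (m := N) (by simp)
  have hT : ∀ i, IsUnit (Matrix.of fun j c => (x j : ι → Fin N → L) i c) :=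
    fun i => linearIndependent_rows_iff_isUnit.1 (hx i)
  refine ⟨N, fun i => (hT i).unit, fun c => X ^ (c : ℕ), fun h => by simpa using congrFun h 0,
    ?_⟩
  funext j
  have := LinearMap.mem_ker.1 (x j).2
  rw [syzygyMap_apply] at this
  simpa [mulVec, dotProduct, IsUnit.unit_spec] using this

theorem exists_irreducible_forall_dvd_of_span_ne_top {R : Type*} [CommRing R] [IsDomain R]
    [IsPrincipalIdealRing R] (hR : ¬ IsField R) {s : Set R} (h : Ideal.span s ≠ ⊤) :
    ∃ p, Irreducible p ∧ ∀ x ∈ s, p ∣ x := by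
  obtain ⟨M, hM, hle⟩ := Ideal.exists_le_maximal _ h
  have := hM.isPrime
  have hp := Submodule.IsPrincipal.prime_generator_of_isPrime M
    (Ring.ne_bot_of_isMaximal_of_not_isField hM hR)
  refine ⟨_, hp.irreducible, fun x hx => ?_⟩
  rw [← Ideal.mem_span_singleton, Ideal.span_singleton_generator]
  exact hle (Ideal.subset_span hx)

theorem exists_isBalanced_of_card_lt {F L : Type*} [Field F] [Field L] [Finite L] (φ : F →+* L)
    {n : ℕ} [NeZero n] (a : Fin n → F[X]) (hcard : n < Nat.card L)
    (hdeg : ∀ k, (a k).degree ≤ (univ.erase k).sup fun j => (a j).degree)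
    (hdvd : ∀ p : F[X], Irreducible p → ∀ k, ∃ j ≠ k, ¬ p ∣ a j) :
    ∃ S, IsBalanced (fun i => algebraMap F[X] (RatFunc F) (a i)) S := by
  have hdeg' : ∀ k,
      ((a k).map φ).natDegree ≤ (univ.erase k).sup fun j => ((a j).map φ).natDegree := by
    intro k
    simp only [natDegree_map]
    exact natDegree_le_iff_degree_le.2 ((hdeg k).trans (Finset.sup_le fun j hj =>
      degree_le_natDegree.trans (Nat.cast_le.2 (le_sup (f := fun j => (a j).natDegree) hj))))
  have hspan : ∀ k,
      Ideal.span ((fun i => (a i).map φ) '' ↑(univ.erase k : Finset (Fin n))) = ⊤ := by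
    intro k
    have : Ideal.span (a '' ↑(univ.erase k : Finset (Fin n))) = ⊤ := by
      by_contra h
      obtain ⟨p, hp, hpdvd⟩ := exists_irreducible_forall_dvd_of_span_ne_top (not_isField F) h
      obtain ⟨j, hj, hpj⟩ := hdvd p hp k
      exact hpj (hpdvd _ ⟨j, by simpa using hj, rfl⟩)
    rw [← Set.image_image (g := map φ), ← coe_mapRingHom, ← Ideal.map_span, this, Ideal.map_top]
  obtain ⟨N, T, v, hv, h⟩ := exists_units_sum_smul_mulVec_eq_zero (fun i => (a i).map φ)
    (by rwa [Fintype.card_fin]) hdeg' hspan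
  let ι : RatFunc F →+* RatFunc L := IsLocalization.map (M := nonZeroDivisors F[X]) (RatFunc L)
    (mapRingHom φ)
    (nonZeroDivisors_le_comap_nonZeroDivisors_of_injective _ (map_injective φ φ.injective))
  let ρ : (Matrix (Fin N) (Fin N) L)ˣ →* Matrix (Fin N) (Fin N) (RatFunc L) :=
    (RingHom.mapMatrix ((algebraMap L[X] (RatFunc L)).comp C)).toMonoidHom.comp (Units.coeHom _)
  refine exists_isBalanced_of_mulVec_eq_zero _ T ι ρ (w := algebraMap L[X] (RatFunc L) ∘ v)
    ?_ ?_
  · exact fun h0 => hv (funext fun c => IsFractionRing.injective L[X] (RatFunc L)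
      (by simpa using congrFun h0 c))
  · funext j
    have := congrArg (algebraMap L[X] (RatFunc L)) (congrFun h j)
    simpa [ι, ρ, map_sum, RingHom.map_mulVec, IsLocalization.map_eq, Algebra.smul_def,
      Function.comp_def] using this

theorem smyth_conjecture_Fqt (F : Type*) [Field F] [Fintype F] (n : ℕ) (hn : 3 ≤ n)
    (a : Fin n → Polynomial F) (hcop : Ideal.span (Set.range a) = ⊤) :
    (∃ S : Multiset (Fin n → RatFunc F),
        IsBalanced (fun i => algebraMap (Polynomial F) (RatFunc F) (a i)) S) ↔
      ((∀ i, (a i).degree ≤ (Finset.univ.erase i).sup fun j => (a j).degree) ∧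
        ∀ p : Polynomial F, Irreducible p →
          (Finset.univ.filter fun i => p ∣ a i).card ≤ n - 2) := by
  have : NeZero n := ⟨by omega⟩
  have hdvd_iff (p : F[X]) : #{i | p ∣ a i} ≤ n - 2 ↔ ∀ k, ∃ j ≠ k, ¬ p ∣ a j := by
    simpa using card_filter_le_sub_two_iff (α := Fin n) (by simp; omega) (p ∣ a ·)
  constructor
  · rintro ⟨S, hS⟩
    exact ⟨hS.degree_le_sup, fun p hp => (hdvd_iff p).2 (hS.exists_ne_not_dvd hcop hp)⟩
  · rintro ⟨hdeg, hdvd⟩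
    have : Fact (ringChar F).Prime := ⟨CharP.char_is_prime F _⟩
    have hcard : n < Nat.card (FiniteField.Extension F (ringChar F) (n + 1)) := by
      rw [FiniteField.natCard_extension]
      have := Nat.lt_pow_self (n := n + 1) (Finite.one_lt_card (α := F))
      exact (Nat.lt_succ_self n).trans this
    exact exists_isBalanced_of_card_lt (algebraMap F _) a hcard hdeg
      fun p hp => (hdvd_iff p).1 (hdvd p hp)
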